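/- Let u = (u1,u2,u3) ∈ ℝ³ and define the 3×3 symmetric traceless matrix M(u) := (1/√2)·(u1·L5 + u2·L4 + u3·L1). Then the eigenvalues of M(u) (counted with multiplicity) are exactly λ1 = −(1/2)(u1 + u2/√3), λ2 = (1/4)(u1 + u2/√3) − (1/4)·√((u1−√3·u2)² + 4u3²), and λ3 = (1/4)(u1 + u2/√3) + (1/4)·√((u1−√3·u2)² + 4u3²). -/

import Mathlib

open Matrix Polynomial

noncomputable def L1 : Matrix (Fin 3) (Fin 3) ℝ :=
  (1 / Real.sqrt 2) • !![0, 0, 1; 0, 0, 0; 1, 0, 0]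

noncomputable def L4 : Matrix (Fin 3) (Fin 3) ℝ :=
  (1 / Real.sqrt 6) • !![-1, 0, 0; 0, -1, 0; 0, 0, 2]

noncomputable def L5 : Matrix (Fin 3) (Fin 3) ℝ :=
  (1 / Real.sqrt 2) • !![1, 0, 0; 0, -1, 0; 0, 0, 0]

lemma charpoly_aux (a b c d : ℝ) :
    (!![a,0,c;0,b,0;c,0,d]).charpoly
      = (X - C b) * ((X - C a) * (X - C d) - C (c*c)) := by
  rw [Matrix.charpoly, Matrix.det_fin_three]
  simp [charmatrix_apply_eq, charmatrix_apply_ne]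
  ring

/-- The eigenvalues (with multiplicity) of `M(u) = (1/√2)(u1 L5 + u2 L4 + u3 L1)` are
exactly `λ1, λ2, λ3` given by the explicit formulas: its characteristic polynomial
factors as `(X - λ1)(X - λ2)(X - λ3)`. -/
theorem eigenvalues_of_LdG_matrix (u1 u2 u3 : ℝ) :
    (((1 / Real.sqrt 2) • (u1 • L5 + u2 • L4 + u3 • L1)).charpoly :
        Polynomial ℝ)
      = (X - C (-(1 / 2) * (u1 + u2 / Real.sqrt 3)))
        * (X - C ((1 / 4) * (u1 + u2 / Real.sqrt 3)
            - (1 / 4) * Real.sqrt ((u1 - Real.sqrt 3 * u2) ^ 2 + 4 * u3 ^ 2)))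
        * (X - C ((1 / 4) * (u1 + u2 / Real.sqrt 3)
            + (1 / 4) * Real.sqrt ((u1 - Real.sqrt 3 * u2) ^ 2 + 4 * u3 ^ 2))) := by
  have h2 : Real.sqrt 2 * Real.sqrt 2 = 2 := Real.mul_self_sqrt (by norm_num)
  have h3 : Real.sqrt 3 * Real.sqrt 3 = 3 := Real.mul_self_sqrt (by norm_num)
  have h6 : Real.sqrt 6 = Real.sqrt 2 * Real.sqrt 3 := by
    rw [← Real.sqrt_mul (by norm_num)]; norm_num
  have h3pos : (0:ℝ) < Real.sqrt 3 := by positivity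
  set r : ℝ := Real.sqrt ((u1 - Real.sqrt 3 * u2) ^ 2 + 4 * u3 ^ 2) with hrdef
  have hr : r ^ 2 = (u1 - Real.sqrt 3 * u2) ^ 2 + 4 * u3 ^ 2 :=
    Real.sq_sqrt (by positivity)
  set a : ℝ := u1/2 - u2/(2*Real.sqrt 3)
  set b : ℝ := -u1/2 - u2/(2*Real.sqrt 3)
  set c : ℝ := u3/2
  set d : ℝ := u2/Real.sqrt 3
  have hM : ((1 / Real.sqrt 2) • (u1 • L5 + u2 • L4 + u3 • L1))
      = !![a, 0, c; 0, b, 0; c, 0, d] := by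
    ext i j
    fin_cases i <;> fin_cases j <;>
      simp [L1, L4, L5, Matrix.smul_apply, Matrix.add_apply, h6, a, b, c, d] <;>
      field_simp
    · linear_combination (-u1*Real.sqrt 3 + u2) * h2
    · linear_combination (-u3) * h2
    · linear_combination (u1*Real.sqrt 3 + u2) * h2
    · linear_combination (-u3) * h2
    · linear_combination (-u2) * h2
  rw [hM, charpoly_aux]
  set l1 : ℝ := -(1 / 2) * (u1 + u2 / Real.sqrt 3)
  set l2 : ℝ := (1 / 4) * (u1 + u2 / Real.sqrt 3) - (1 / 4) * r
  set l3 : ℝ := (1 / 4) * (u1 + u2 / Real.sqrt 3) + (1 / 4) * r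
  have hb : b = l1 := by simp only [b, l1]; ring
  have hsum : a + d = l2 + l3 := by
    simp only [a, d, l2, l3]; ring
  have hprod : a * d - c * c = l2 * l3 := by
    have : l2 * l3 = (1/16) * (u1 + u2 / Real.sqrt 3)^2 - (1/16) * r^2 := by
      simp only [l2, l3]; ring
    rw [this, hr]
    have h3ne : Real.sqrt 3 ≠ 0 := h3pos.ne'
    show (u1/2 - u2/(2*Real.sqrt 3)) * (u2/Real.sqrt 3) - (u3/2)*(u3/2) = _
    have hinv : Real.sqrt 3 * (Real.sqrt 3)⁻¹ = 1 := mul_inv_cancel₀ h3ne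
    linear_combination (-(u1*u2)/(8*Real.sqrt 3)
        + u2^2*(Real.sqrt 3^2+3)/(16*Real.sqrt 3^2)) * h3
      + (u1*u2*Real.sqrt 3/8
        - u2^2*Real.sqrt 3^2*(Real.sqrt 3*(Real.sqrt 3)⁻¹+1)/16) * hinv
  have expand : (X - C a) * (X - C d) - C (c*c)
      = X^2 - C (a + d) * X + C (a*d - c*c) := by
    simp only [C_add, C_sub, C_mul]; ring
  rw [hb, expand, hsum, hprod]
  simp only [C_add, C_mul]
  ring
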